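/- Let A and B be lattices with least elements. Then A ⊠ B is a capped sub-tensor product of A and B. Furthermore, A ⊠ B is the smallest sub-tensor product of A and B with respect to containment: every sub-tensor product of A and B contains A ⊠ B. -/

import Mathlib

/-- The pure box `a □ b = {⟨x,y⟩ : x ≤ a or y ≤ b}`. -/
def pureBox {A B : Type*} [Lattice A] [Lattice B] (a : A) (b : B) : Set (A × B) :=
  {p : A × B | p.1 ≤ a ∨ p.2 ≤ b}

/-- `a ∘ b = {⟨x,y⟩ : x ≤ a and y ≤ b}`. -/
def pureCirc {A B : Type*} [Lattice A] [Lattice B] (a : A) (b : B) : Set (A × B) :=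
  {p : A × B | p.1 ≤ a ∧ p.2 ≤ b}

/-- The box product `A □ B`: all finite (nonempty) intersections of pure boxes. -/
def BoxProd (A B : Type*) [Lattice A] [Lattice B] : Set (Set (A × B)) :=
  {H | ∃ (n : ℕ) (a : Fin (n + 1) → A) (b : Fin (n + 1) → B),
    H = ⋂ i, pureBox (a i) (b i)}

/-- `A ⊡ B`: all finite unions of pure boxes (at least one) and pure circles. -/
def BoxDot (A B : Type*) [Lattice A] [Lattice B] : Set (Set (A × B)) :=
  {H | ∃ (m n : ℕ) (a : Fin (m + 1) → A) (b : Fin (m + 1) → B)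
      (c : Fin n → A) (d : Fin n → B),
    H = (⋃ i, pureBox (a i) (b i)) ∪ ⋃ j, pureCirc (c j) (d j)}

/-- The box closure of a subset of `A × B`: intersection of all pure boxes containing it. -/
def BoxCl {A B : Type*} [Lattice A] [Lattice B] (X : Set (A × B)) : Set (A × B) :=
  ⋂ (a : A) (b : B) (_ : X ⊆ pureBox a b), pureBox a b

/-- The pure lattice tensor `a ⊠ b = (a ∘ b) ∪ ⊥_{A,B}`, where `⊥_{A,B}` consists of
the pairs one of whose coordinates is a least element. -/
def pureTens {A B : Type*} [Lattice A] [Lattice B] (a : A) (b : B) : Set (A × B) :=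
  pureCirc a b ∪ {p : A × B | IsBot p.1 ∨ IsBot p.2}

/-- A subset of `A × B` is confined if it is contained in some pure lattice tensor. -/
def Confined {A B : Type*} [Lattice A] [Lattice B] (X : Set (A × B)) : Prop :=
  ∃ (a : A) (b : B), X ⊆ pureTens a b

/-- The lattice tensor product `A ⊠ B`: all confined elements of `A □ B`. -/
def LatTens (A B : Type*) [Lattice A] [Lattice B] : Set (Set (A × B)) :=
  {H | H ∈ BoxProd A B ∧ Confined H}

/-- `X^△ = {⟨a,b⟩ : ⟨x,y⟩ ◁ ⟨a,b⟩ for all ⟨x,y⟩ ∈ X}` where `⟨x,y⟩ ◁ ⟨a,b⟩` iff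
`x ≤ a` or `y ≤ b`. -/
def trUp {A B : Type*} [Lattice A] [Lattice B] (X : Set (A × B)) : Set (A × B) :=
  {p : A × B | ∀ q ∈ X, q.1 ≤ p.1 ∨ q.2 ≤ p.2}

/-- `X^▽ = {⟨a,b⟩ : ⟨a,b⟩ ◁ ⟨x,y⟩ for all ⟨x,y⟩ ∈ X}`. -/
def trDown {A B : Type*} [Lattice A] [Lattice B] (X : Set (A × B)) : Set (A × B) :=
  {p : A × B | ∀ q ∈ X, p.1 ≤ q.1 ∨ p.2 ≤ q.2}

/-- A bi-ideal of `A × B` (for lattices with zero). -/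
def IsBiIdeal {A B : Type*} [Lattice A] [OrderBot A] [Lattice B] [OrderBot B]
    (H : Set (A × B)) : Prop :=
  (∀ a : A, (a, (⊥ : B)) ∈ H) ∧ (∀ b : B, ((⊥ : A), b) ∈ H) ∧
  (∀ p q : A × B, q.1 ≤ p.1 → q.2 ≤ p.2 → p ∈ H → q ∈ H) ∧
  (∀ (a₀ a₁ : A) (b : B), (a₀, b) ∈ H → (a₁, b) ∈ H → (a₀ ⊔ a₁, b) ∈ H) ∧
  (∀ (a : A) (b₀ b₁ : B), (a, b₀) ∈ H → (a, b₁) ∈ H → (a, b₀ ⊔ b₁) ∈ H)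

/-- The semilattice tensor product `A ⊗ B`: the bi-ideals of `A × B` that are the
smallest bi-ideal containing some finite union of pure tensors. -/
def TensProd (A B : Type*) [Lattice A] [OrderBot A] [Lattice B] [OrderBot B] :
    Set (Set (A × B)) :=
  {H | IsBiIdeal H ∧ ∃ (n : ℕ) (a : Fin (n + 1) → A) (b : Fin (n + 1) → B),
    (⋃ i, pureCirc (a i) (b i)) ⊆ H ∧
    ∀ K : Set (A × B), IsBiIdeal K → (⋃ i, pureCirc (a i) (b i)) ⊆ K → H ⊆ K}

/-- A sub-tensor product of `A` and `B`: a subset of `A ⊗ B` closed under finite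
intersections, forming a lattice under containment, and containing all mixed
tensors. -/
def IsSubTensorProduct {A B : Type*} [Lattice A] [OrderBot A] [Lattice B] [OrderBot B]
    (C : Set (Set (A × B))) : Prop :=
  C ⊆ TensProd A B ∧
  (∀ H ∈ C, ∀ K ∈ C, H ∩ K ∈ C) ∧
  (∀ H ∈ C, ∀ K ∈ C,
    (∃ J ∈ C, H ⊆ J ∧ K ⊆ J ∧ ∀ L ∈ C, H ⊆ L → K ⊆ L → J ⊆ L) ∧
    (∃ J ∈ C, J ⊆ H ∧ J ⊆ K ∧ ∀ L ∈ C, L ⊆ H → L ⊆ K → L ⊆ J)) ∧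
  ∀ (a₀ a₁ : A) (b₀ b₁ : B),
    (a₀ ≤ a₁ ∧ b₁ ≤ b₀) ∨ (a₁ ≤ a₀ ∧ b₀ ≤ b₁) →
    pureTens a₀ b₀ ∪ pureTens a₁ b₁ ∈ C

/-!
A confined element `H = ⋂ᵢ (cᵢ □ dᵢ) ⊆ a ⊠ b` of `A □ B` equals `⋂ᵢ ((a ⊠ b) ∩ (cᵢ □ dᵢ))`,
and each factor `(a ⊠ b) ∩ (c □ d) = ((a ∧ c) ⊠ b) ∪ (a ⊠ (b ∧ d))` is a mixed tensor. So `H`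
lies in every family closed under finite intersections that contains the mixed tensors: in
every sub-tensor product, and in the finite unions of pure tensors, which are closed under
intersection because `(a ⊠ b) ∩ (c ⊠ d) = (a ∧ c) ⊠ (b ∧ d)`.

Since `c ⊠ d ⊆ a □ b` iff `c ≤ a` or `d ≤ b`, the join in `A ⊠ B` of finite unions of pure
tensors `⋃ᵢ cᵢ ⊠ dᵢ` is the intersection of the boxes `(⋁_{i ∈ S} cᵢ) □ (⋁_{i ∉ S} dᵢ)` over
all sets of indices `S`.
-/

lemma Finset.exists_fin_succ_range_eq {α : Type*} {s : Finset α} (hs : s.Nonempty) :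
    ∃ (n : ℕ) (f : Fin (n + 1) → α), Set.range f = s := by
  obtain ⟨n, f, hf⟩ := s.finite_toSet.fin_embedding
  cases n with
  | zero =>
    rw [Set.range_eq_empty, eq_comm, Finset.coe_eq_empty] at hf
    exact absurd hf hs.ne_empty
  | succ n => exact ⟨n, f, hf⟩

open scoped FinsetFamily

section Lattice

variable {A B : Type*} [Lattice A] [Lattice B]

lemma pureBox_mono {a a' : A} {b b' : B} (ha : a ≤ a') (hb : b ≤ b') :
    pureBox a b ⊆ pureBox a' b' :=
  fun _ hx => hx.imp (le_trans · ha) (le_trans · hb)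

lemma pureTens_mono {a a' : A} {b b' : B} (ha : a ≤ a') (hb : b ≤ b') :
    pureTens a b ⊆ pureTens a' b' :=
  Set.union_subset_union_left _ fun _ hp => ⟨hp.1.trans ha, hp.2.trans hb⟩

lemma pureTens_subset_pureBox_iff {a c : A} {b d : B} :
    pureTens c d ⊆ pureBox a b ↔ c ≤ a ∨ d ≤ b := by
  refine ⟨fun h => @h (c, d) (Or.inl ⟨le_rfl, le_rfl⟩), ?_⟩
  rintro (h | h) p (⟨hc, hd⟩ | hp | hp)
  · exact Or.inl (hc.trans h)
  · exact Or.inl (hp a)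
  · exact Or.inr (hp b)
  · exact Or.inr (hd.trans h)
  · exact Or.inl (hp a)
  · exact Or.inr (hp b)

lemma pureTens_inter_pureTens (a c : A) (b d : B) :
    pureTens a b ∩ pureTens c d = pureTens (a ⊓ c) (b ⊓ d) := by
  refine subset_antisymm ?_ (Set.subset_inter (pureTens_mono inf_le_left inf_le_left)
    (pureTens_mono inf_le_right inf_le_right))
  rintro x ⟨⟨ha, hb⟩ | hx, ⟨hc, hd⟩ | hx'⟩
  · exact Or.inl ⟨le_inf ha hc, le_inf hb hd⟩
  · exact Or.inr hx'
  · exact Or.inr hx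
  · exact Or.inr hx

lemma pureTens_inter_pureBox (a c : A) (b d : B) :
    pureTens a b ∩ pureBox c d = pureTens (a ⊓ c) b ∪ pureTens a (b ⊓ d) := by
  refine subset_antisymm ?_ (Set.union_subset ?_ ?_)
  · rintro x ⟨⟨ha, hb⟩ | hx, hc | hd⟩
    · exact Or.inl (Or.inl ⟨le_inf ha hc, hb⟩)
    · exact Or.inr (Or.inl ⟨ha, le_inf hb hd⟩)
    · exact Or.inl (Or.inr hx)
    · exact Or.inl (Or.inr hx)
  · exact Set.subset_inter (pureTens_mono inf_le_left le_rfl)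
      (pureTens_subset_pureBox_iff.2 (Or.inl inf_le_right))
  · exact Set.subset_inter (pureTens_mono le_rfl inf_le_left)
      (pureTens_subset_pureBox_iff.2 (Or.inr inf_le_right))

lemma pureTens_union_pureTens {a₀ a₁ : A} {b₀ b₁ : B} (ha : a₀ ≤ a₁) (hb : b₁ ≤ b₀) :
    pureTens a₀ b₀ ∪ pureTens a₁ b₁ = pureTens a₁ b₀ ∩ pureBox a₀ b₁ := by
  refine subset_antisymm (Set.union_subset ?_ ?_) ?_
  · exact Set.subset_inter (pureTens_mono ha le_rfl)
      (pureTens_subset_pureBox_iff.2 (Or.inl le_rfl))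
  · exact Set.subset_inter (pureTens_mono le_rfl hb)
      (pureTens_subset_pureBox_iff.2 (Or.inr le_rfl))
  · rintro x ⟨⟨h₁, h₀⟩ | hx, h₀' | h₁'⟩
    · exact Or.inl (Or.inl ⟨h₀', h₀⟩)
    · exact Or.inr (Or.inl ⟨h₁, h₁'⟩)
    · exact Or.inl (Or.inr hx)
    · exact Or.inl (Or.inr hx)

def boxInter (s : Finset (A × B)) : Set (A × B) :=
  ⋂ p ∈ s, pureBox p.1 p.2

def tensUnion (s : Finset (A × B)) : Set (A × B) :=
  ⋃ p ∈ s, pureTens p.1 p.2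

lemma mem_boxInter {s : Finset (A × B)} {x : A × B} :
    x ∈ boxInter s ↔ ∀ p ∈ s, x.1 ≤ p.1 ∨ x.2 ≤ p.2 :=
  Set.mem_iInter₂

lemma pureTens_subset_tensUnion {s : Finset (A × B)} {p : A × B} (hp : p ∈ s) :
    pureTens p.1 p.2 ⊆ tensUnion s :=
  Finset.subset_set_biUnion_of_mem (f := fun q => pureTens q.1 q.2) hp

lemma boxInter_union [DecidableEq (A × B)] (s t : Finset (A × B)) :
    boxInter (s ∪ t) = boxInter s ∩ boxInter t :=
  Finset.iInf_union

lemma tensUnion_union [DecidableEq (A × B)] (s t : Finset (A × B)) :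
    tensUnion (s ∪ t) = tensUnion s ∪ tensUnion t :=
  Finset.set_biUnion_union s t _

lemma tensUnion_inter_tensUnion [DecidableEq (A × B)] (s t : Finset (A × B)) :
    tensUnion s ∩ tensUnion t = tensUnion (s ⊼ t) := by
  ext x
  simp only [tensUnion, Set.iUnion₂_inter, Set.inter_iUnion₂, Set.mem_iUnion, Finset.mem_infs,
    pureTens_inter_pureTens, exists_prop]
  constructor
  · rintro ⟨q, hq, p, hp, hx⟩
    exact ⟨p ⊓ q, ⟨p, hp, q, hq, rfl⟩, hx⟩
  · rintro ⟨_, ⟨p, hp, q, hq, rfl⟩, hx⟩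
    exact ⟨q, hq, p, hp, hx⟩

lemma mem_boxProd_iff {H : Set (A × B)} :
    H ∈ BoxProd A B ↔ ∃ s : Finset (A × B), s.Nonempty ∧ H = boxInter s := by
  classical
  constructor
  · rintro ⟨n, a, b, rfl⟩
    refine ⟨Finset.univ.image fun i => (a i, b i), Finset.univ_nonempty.image _, ?_⟩
    simp [boxInter]
  · rintro ⟨s, hs, rfl⟩
    obtain ⟨n, f, hf⟩ := Finset.exists_fin_succ_range_eq hs
    exact ⟨n, fun i => (f i).1, fun i => (f i).2,
      by rw [boxInter, ← Finset.set_biInter_coe, ← hf, Set.biInter_range]⟩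

lemma pureBox_mem_boxProd (a : A) (b : B) : pureBox a b ∈ BoxProd A B :=
  ⟨0, fun _ => a, fun _ => b, (Set.iInter_const _).symm⟩

lemma inter_mem_latTens_of_mem_boxProd {H K : Set (A × B)} (hH : H ∈ LatTens A B)
    (hK : K ∈ BoxProd A B) : H ∩ K ∈ LatTens A B := by
  classical
  obtain ⟨hHbox, a, b, hconf⟩ := hH
  obtain ⟨s, hs, rfl⟩ := mem_boxProd_iff.1 hHbox
  obtain ⟨t, -, rfl⟩ := mem_boxProd_iff.1 hK
  exact ⟨mem_boxProd_iff.2 ⟨s ∪ t, hs.mono Finset.subset_union_left, (boxInter_union s t).symm⟩,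
    a, b, Set.inter_subset_left.trans hconf⟩

lemma inter_mem_latTens {H K : Set (A × B)} (hH : H ∈ LatTens A B) (hK : K ∈ LatTens A B) :
    H ∩ K ∈ LatTens A B :=
  inter_mem_latTens_of_mem_boxProd hH hK.1

variable {C : Set (Set (A × B))}

lemma pureTens_inter_boxInter_mem (hinter : ∀ H ∈ C, ∀ K ∈ C, H ∩ K ∈ C)
    (hmixed : ∀ (a₀ a₁ : A) (b₀ b₁ : B), a₀ ≤ a₁ → b₁ ≤ b₀ →
      pureTens a₀ b₀ ∪ pureTens a₁ b₁ ∈ C) (a : A) (b : B) (s : Finset (A × B)) :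
    pureTens a b ∩ boxInter s ∈ C := by
  classical
  induction s using Finset.induction_on with
  | empty =>
    simpa [boxInter] using hmixed a a b b le_rfl le_rfl
  | insert q s _ ih =>
    rw [boxInter, Finset.set_biInter_insert, ← boxInter, Set.inter_inter_distrib_left,
      pureTens_inter_pureBox]
    exact hinter _ (hmixed _ _ _ _ inf_le_left inf_le_left) _ ih

lemma latTens_subset (hinter : ∀ H ∈ C, ∀ K ∈ C, H ∩ K ∈ C)
    (hmixed : ∀ (a₀ a₁ : A) (b₀ b₁ : B), a₀ ≤ a₁ → b₁ ≤ b₀ →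
      pureTens a₀ b₀ ∪ pureTens a₁ b₁ ∈ C) :
    LatTens A B ⊆ C := by
  rintro H ⟨hH, a, b, hconf⟩
  obtain ⟨s, -, rfl⟩ := mem_boxProd_iff.1 hH
  rw [← Set.inter_eq_right.2 hconf]
  exact pureTens_inter_boxInter_mem hinter hmixed a b s

lemma latTens_subset_range_tensUnion :
    LatTens A B ⊆ Set.range (tensUnion (A := A) (B := B)) := by
  classical
  refine latTens_subset ?_ fun a₀ a₁ b₀ b₁ _ _ => ⟨{(a₀, b₀), (a₁, b₁)}, ?_⟩
  · rintro _ ⟨s, rfl⟩ _ ⟨t, rfl⟩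
    exact ⟨s ⊼ t, (tensUnion_inter_tensUnion s t).symm⟩
  · simp [tensUnion]

end Lattice

section OrderBot

variable {A B : Type*} [Lattice A] [OrderBot A] [Lattice B] [OrderBot B]

lemma IsBiIdeal.mem_of_isBot {H : Set (A × B)} (hH : IsBiIdeal H) {x : A × B}
    (hx : IsBot x.1 ∨ IsBot x.2) : x ∈ H := by
  obtain ⟨hA, hB, hdown, -, -⟩ := hH
  rcases hx with hx | hx
  · exact hdown (⊥, x.2) x (hx ⊥) le_rfl (hB x.2)
  · exact hdown (x.1, ⊥) x le_rfl (hx ⊥) (hA x.1)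

lemma isBiIdeal_boxInter (s : Finset (A × B)) : IsBiIdeal (boxInter s) := by
  simp only [IsBiIdeal, mem_boxInter]
  refine ⟨fun _ _ _ => Or.inr bot_le, fun _ _ _ => Or.inl bot_le, ?_, ?_, ?_⟩
  · intro x y h₁ h₂ hx p hp
    exact (hx p hp).imp h₁.trans h₂.trans
  · intro a₀ a₁ b h₀ h₁ p hp
    rcases h₀ p hp with h₀ | hb
    · exact (h₁ p hp).imp (sup_le h₀) id
    · exact Or.inr hb
  · intro a b₀ b₁ h₀ h₁ p hp
    rcases h₀ p hp with ha | h₀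
    · exact Or.inl ha
    · exact (h₁ p hp).imp id (sup_le h₀)

lemma mem_tensProd {H : Set (A × B)} (hH : IsBiIdeal H) {s : Finset (A × B)}
    (hs : tensUnion s = H) : H ∈ TensProd A B := by
  have hne : s.Nonempty := by
    have hbot : ((⊥ : A), (⊥ : B)) ∈ tensUnion s := hs ▸ hH.1 ⊥
    simp only [tensUnion, Set.mem_iUnion₂] at hbot
    obtain ⟨p, hp, -⟩ := hbot
    exact ⟨p, hp⟩
  obtain ⟨n, f, hf⟩ := Finset.exists_fin_succ_range_eq hne
  have hcirc : (⋃ i, pureCirc (f i).1 (f i).2) = ⋃ p ∈ s, pureCirc p.1 p.2 := by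
    rw [← Finset.set_biUnion_coe, ← hf, Set.biUnion_range]
  refine ⟨hH, n, fun i => (f i).1, fun i => (f i).2, ?_, fun K hK hsub => ?_⟩
  · rw [hcirc, ← hs]
    exact Set.biUnion_mono subset_rfl fun p _ => Set.subset_union_left
  · rw [hcirc] at hsub
    rw [← hs]
    refine Set.iUnion₂_subset fun p hp => Set.union_subset ?_ fun x hx => hK.mem_of_isBot hx
    exact (Set.subset_biUnion_of_mem hp).trans hsub

lemma latTens_subset_tensProd : LatTens A B ⊆ TensProd A B := by
  intro H hH
  obtain ⟨s, hs⟩ := latTens_subset_range_tensUnion hH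
  obtain ⟨t, -, rfl⟩ := mem_boxProd_iff.1 hH.1
  exact mem_tensProd (isBiIdeal_boxInter t) hs

lemma pureTens_eq_boxInter [DecidableEq (A × B)] (a : A) (b : B) :
    pureTens a b = boxInter {(a, ⊥), (⊥, b)} := by
  ext x
  simp only [pureTens, pureCirc, Set.mem_union, mem_boxInter, Finset.mem_insert,
    Finset.mem_singleton, forall_eq_or_imp, forall_eq, isBot_iff_eq_bot, le_bot_iff]
  constructor
  · rintro (⟨ha, hb⟩ | hx | hy)
    · exact ⟨Or.inl ha, Or.inr hb⟩
    · exact ⟨Or.inl (hx ▸ bot_le), Or.inl hx⟩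
    · exact ⟨Or.inr hy, Or.inr (hy ▸ bot_le)⟩
  · rintro ⟨ha | hy, hx | hb⟩
    · exact Or.inr (Or.inl hx)
    · exact Or.inl ⟨ha, hb⟩
    · exact Or.inr (Or.inl hx)
    · exact Or.inr (Or.inr hy)

lemma pureTens_mem_latTens (a : A) (b : B) : pureTens a b ∈ LatTens A B := by
  classical
  exact ⟨mem_boxProd_iff.2 ⟨_, Finset.insert_nonempty _ _, pureTens_eq_boxInter a b⟩,
    a, b, subset_rfl⟩

lemma pureTens_union_mem_latTens {a₀ a₁ : A} {b₀ b₁ : B} (ha : a₀ ≤ a₁) (hb : b₁ ≤ b₀) :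
    pureTens a₀ b₀ ∪ pureTens a₁ b₁ ∈ LatTens A B := by
  rw [pureTens_union_pureTens ha hb]
  exact inter_mem_latTens_of_mem_boxProd (pureTens_mem_latTens a₁ b₀) (pureBox_mem_boxProd a₀ b₁)

section Hull

variable [DecidableEq (A × B)]

def hullCorners (s : Finset (A × B)) : Finset (A × B) :=
  s.powerset.image fun t => (t.sup Prod.fst, (s \ t).sup Prod.snd)

lemma tensUnion_subset_boxInter_hullCorners (s : Finset (A × B)) :
    tensUnion s ⊆ boxInter (hullCorners s) := by
  refine Set.iUnion₂_subset fun p hp => ?_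
  rw [boxInter, hullCorners, Finset.set_biInter_finset_image]
  refine Set.subset_iInter₂ fun t _ => pureTens_subset_pureBox_iff.2 ?_
  by_cases hpt : p ∈ t
  · exact Or.inl (Finset.le_sup (f := Prod.fst) hpt)
  · exact Or.inr (Finset.le_sup (f := Prod.snd) (Finset.mem_sdiff.2 ⟨hp, hpt⟩))

lemma boxInter_hullCorners_subset_pureBox {s : Finset (A × B)} {a : A} {b : B}
    (h : tensUnion s ⊆ pureBox a b) : boxInter (hullCorners s) ⊆ pureBox a b := by
  classical
  set t := s.filter fun p => p.1 ≤ a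
  have hcorner : (t.sup Prod.fst, (s \ t).sup Prod.snd) ∈ hullCorners s :=
    Finset.mem_image_of_mem _ (Finset.mem_powerset.2 (Finset.filter_subset _ _))
  refine (Set.biInter_subset_of_mem hcorner).trans (pureBox_mono ?_ ?_)
  · exact Finset.sup_le fun p hp => (Finset.mem_filter.1 hp).2
  · refine Finset.sup_le fun p hp => ?_
    obtain ⟨hps, hpt⟩ := Finset.mem_sdiff.1 hp
    exact (pureTens_subset_pureBox_iff.1 ((pureTens_subset_tensUnion hps).trans h)).resolve_left
      fun ha => hpt (Finset.mem_filter.2 ⟨hps, ha⟩)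

lemma boxInter_hullCorners_subset_iff {s t : Finset (A × B)} :
    boxInter (hullCorners s) ⊆ boxInter t ↔ tensUnion s ⊆ boxInter t :=
  ⟨(tensUnion_subset_boxInter_hullCorners s).trans, fun h => Set.subset_iInter₂ fun _ hp =>
    boxInter_hullCorners_subset_pureBox (h.trans (Set.biInter_subset_of_mem hp))⟩

lemma boxInter_hullCorners_mem_latTens (s : Finset (A × B)) :
    boxInter (hullCorners s) ∈ LatTens A B := by
  refine ⟨mem_boxProd_iff.2 ⟨_, s.powerset_nonempty.image _, rfl⟩,
    s.sup Prod.fst, s.sup Prod.snd, ?_⟩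
  have hconf : tensUnion s ⊆ pureTens (s.sup Prod.fst) (s.sup Prod.snd) :=
    Set.iUnion₂_subset fun p hp => pureTens_mono (Finset.le_sup hp) (Finset.le_sup hp)
  rw [pureTens_eq_boxInter] at hconf ⊢
  exact boxInter_hullCorners_subset_iff.2 hconf

end Hull

lemma exists_latTens_join {H K : Set (A × B)} (hH : H ∈ LatTens A B) (hK : K ∈ LatTens A B) :
    ∃ J ∈ LatTens A B, H ⊆ J ∧ K ⊆ J ∧ ∀ L ∈ LatTens A B, H ⊆ L → K ⊆ L → J ⊆ L := by
  classical
  obtain ⟨s, rfl⟩ := latTens_subset_range_tensUnion hH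
  obtain ⟨t, rfl⟩ := latTens_subset_range_tensUnion hK
  have hsub := tensUnion_subset_boxInter_hullCorners (s ∪ t)
  rw [tensUnion_union] at hsub
  refine ⟨_, boxInter_hullCorners_mem_latTens (s ∪ t), Set.subset_union_left.trans hsub,
    Set.subset_union_right.trans hsub, fun L hL hsL htL => ?_⟩
  obtain ⟨u, -, rfl⟩ := mem_boxProd_iff.1 hL.1
  rw [boxInter_hullCorners_subset_iff, tensUnion_union]
  exact Set.union_subset hsL htL

end OrderBot

/-- `A ⊠ B` is a capped sub-tensor product of `A` and `B` (every element being a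
finite union of pure tensors), and it is the smallest sub-tensor product. -/
theorem stmt_19 {A B : Type*} [Lattice A] [OrderBot A] [Lattice B] [OrderBot B] :
    IsSubTensorProduct (LatTens A B) ∧
    (∀ H ∈ LatTens A B, ∃ (n : ℕ) (a : Fin n → A) (b : Fin n → B),
      H = ⋃ i, pureTens (a i) (b i)) ∧
    ∀ C : Set (Set (A × B)), IsSubTensorProduct C → LatTens A B ⊆ C := by
  refine ⟨⟨latTens_subset_tensProd, fun H hH K hK => inter_mem_latTens hH hK,
    fun H hH K hK => ⟨exists_latTens_join hH hK, H ∩ K, inter_mem_latTens hH hK,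
      Set.inter_subset_left, Set.inter_subset_right, fun _ _ => Set.subset_inter⟩, ?_⟩, ?_,
    fun C hC => latTens_subset hC.2.1 fun a₀ a₁ b₀ b₁ ha hb => hC.2.2.2 a₀ a₁ b₀ b₁ (.inl ⟨ha, hb⟩)⟩
  · rintro a₀ a₁ b₀ b₁ (⟨ha, hb⟩ | ⟨ha, hb⟩)
    · exact pureTens_union_mem_latTens ha hb
    · rw [Set.union_comm]
      exact pureTens_union_mem_latTens ha hb
  · intro H hH
    obtain ⟨s, rfl⟩ := latTens_subset_range_tensUnion hH
    obtain ⟨n, f, hf⟩ := s.finite_toSet.fin_embedding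
    exact ⟨n, fun i => (f i).1, fun i => (f i).2,
      by rw [tensUnion, ← Finset.set_biUnion_coe, ← hf, Set.biUnion_range]⟩
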